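/- Let y1 > y0 and x1 > 0. The function g(θ) = √((y1−y0)² + (2x1 − (y1−y0)/tan θ)²) − (y1−y0)/sin θ is monotonically increasing on the interval [arctan((y1−y0)/(2x1)), π). -/

import Mathlib

/-!
Put `a = y₁ - y₀`, `b = 2 x₁`, `u = cot θ` (decreasing on `(0, π)`) and `F t = √(a² + t²)`.
Since `a / sin θ = F (a cot θ)`, the function equals `F (a u - b) - F (a u)`. As `F` is convex
(it is the modulus of `a + t i`), its increments `F (s + b) - F s` over a fixed step `b ≥ 0` grow
with `s`, so the difference decreases in `u` and therefore increases in `θ`.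
-/

open Real Set

theorem ConvexOn.monotone_add_sub {𝕜 : Type*} [Field 𝕜] [LinearOrder 𝕜] [IsStrictOrderedRing 𝕜]
    {f : 𝕜 → 𝕜} (hf : ConvexOn 𝕜 univ f) {c : 𝕜} (hc : 0 ≤ c) :
    Monotone fun x => f (x + c) - f x := by
  intro x y hxy
  rcases hc.eq_or_lt with rfl | hc
  · simp
  rcases hxy.eq_or_lt with rfl | hxy
  · rfl
  have h₁ := hf.secant_mono_aux1 (mem_univ x) (mem_univ (y + c)) (lt_add_of_pos_right x hc)
    (by linarith)
  have h₂ := hf.secant_mono_aux1 (mem_univ x) (mem_univ (y + c)) hxy (lt_add_of_pos_right y hc)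
  -- `x + c` and `y` both lie inside `[x, y + c]`; add the two chord inequalities.
  have hL : 0 < y + c - x := by linarith
  refine le_of_mul_le_mul_left ?_ hL
  linear_combination h₁ + h₂

theorem convexOn_sqrt_sq_add_sq (a : ℝ) : ConvexOn ℝ univ fun t : ℝ => √(a ^ 2 + t ^ 2) := by
  have h := (convexOn_univ_norm (E := ℂ)).comp_affineMap (AffineMap.lineMap (a : ℂ) (a + Complex.I))
  refine (by simpa using h : ConvexOn ℝ univ _).congr fun t _ => ?_
  simp [AffineMap.lineMap_apply_module', add_comm, Complex.norm_add_mul_I]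

theorem Real.cot_antitoneOn : AntitoneOn cot (Ioo 0 π) := by
  intro θ₁ h₁ θ₂ h₂ hle
  have hs₁ := sin_pos_of_pos_of_lt_pi h₁.1 h₁.2
  have hs₂ := sin_pos_of_pos_of_lt_pi h₂.1 h₂.2
  have hsub : 0 ≤ sin (θ₂ - θ₁) := sin_nonneg_of_nonneg_of_le_pi (by linarith) (by linarith [h₁.1, h₂.2])
  rw [sin_sub] at hsub
  rw [cot_eq_cos_div_sin, cot_eq_cos_div_sin, div_le_div_iff₀ hs₂ hs₁]
  linarith

theorem Real.div_tan_eq_mul_cot (a θ : ℝ) : a / tan θ = a * cot θ := by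
  rw [div_eq_mul_inv, ← cot_inv_eq_tan, inv_inv]

theorem Real.sqrt_sq_add_mul_cot_sq {a θ : ℝ} (ha : 0 ≤ a) (hθ : 0 < sin θ) :
    √(a ^ 2 + (a * cot θ) ^ 2) = a / sin θ := by
  have h : a ^ 2 + (a * cot θ) ^ 2 = (a / sin θ) ^ 2 := by
    rw [cot_eq_cos_div_sin]
    field_simp
    linear_combination a ^ 2 * sin_sq_add_cos_sq θ
  rw [h, sqrt_sq (div_nonneg ha hθ.le)]

theorem monotoneOn_sqrt_sq_add_sq_sub_div_sin {a b : ℝ} (ha : 0 ≤ a) (hb : 0 ≤ b) :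
    MonotoneOn (fun θ : ℝ => √(a ^ 2 + (b - a / tan θ) ^ 2) - a / sin θ) (Ioo 0 π) := by
  set F : ℝ → ℝ := fun t => √(a ^ 2 + t ^ 2)
  have hF : ∀ θ ∈ Ioo 0 π, √(a ^ 2 + (b - a / tan θ) ^ 2) - a / sin θ
      = -(F (a * cot θ - b + b) - F (a * cot θ - b)) := by
    intro θ hθ
    rw [div_tan_eq_mul_cot, ← sqrt_sq_add_mul_cot_sq ha (sin_pos_of_pos_of_lt_pi hθ.1 hθ.2)]
    rw [neg_sub, sub_add_cancel, ← neg_sub (a * cot θ) b, neg_sq]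
  intro θ₁ h₁ θ₂ h₂ hle
  simp only [hF θ₁ h₁, hF θ₂ h₂, neg_le_neg_iff]
  have hcot : a * cot θ₂ - b ≤ a * cot θ₁ - b := by
    gcongr
    exact cot_antitoneOn h₁ h₂ hle
  exact (convexOn_sqrt_sq_add_sq a).monotone_add_sub hb hcot

theorem path_difference_monotone (y0 y1 x1 : ℝ) (hy : y0 < y1) (hx1 : 0 < x1) :
    MonotoneOn
      (fun θ : ℝ =>
        Real.sqrt ((y1 - y0) ^ 2 + (2 * x1 - (y1 - y0) / Real.tan θ) ^ 2)
          - (y1 - y0) / Real.sin θ)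
      (Set.Ico (Real.arctan ((y1 - y0) / (2 * x1))) π) := by
  have harctan : 0 < arctan ((y1 - y0) / (2 * x1)) :=
    arctan_pos.2 (div_pos (sub_pos.2 hy) (by positivity))
  exact (monotoneOn_sqrt_sq_add_sq_sub_div_sin (sub_nonneg.2 hy.le) (by positivity)).mono
    fun θ hθ => ⟨harctan.trans_le hθ.1, hθ.2⟩
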